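/- The group R of rational homeomorphisms of Cantor space is generated by its elements of small support; consequently R equals its commutator subgroup [R, R]. -/

import Mathlib

/-- The Cantor space of infinite binary sequences. -/
abbrev Cantor : Type := ℕ → Bool

/-- Prepend a finite binary word to an infinite binary sequence. -/
def prepend (α : List Bool) (ψ : Cantor) : Cantor :=
  fun n => if h : n < α.length then α.get ⟨n, h⟩ else ψ (n - α.length)

/-- The basic clopen cone `I_α` of sequences beginning with the finite word `α`. -/
def cone (α : List Bool) : Set Cantor :=
  {ψ | ∀ i (h : i < α.length), ψ i = α.get ⟨i, h⟩}

/-- An asynchronous binary transducer with state set `S` (the initial state `s0`,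
the transition function `t` and the output function `o`). -/
structure Transducer (S : Type) where
  s0 : S
  t : S → Bool → S
  o : S → Bool → List Bool

/-- The extended transition function on finite binary words. -/
def Transducer.tStar {S : Type} (T : Transducer S) : S → List Bool → S
  | s, [] => s
  | s, b :: α => T.tStar (T.t s b) α

/-- The extended output function on finite binary words. -/
def Transducer.oStar {S : Type} (T : Transducer S) : S → List Bool → List Bool
  | _, [] => []
  | s, b :: α => T.o s b ++ T.oStar (T.t s b) α

/-- The length-`n` prefix of an infinite binary sequence, as a finite word. -/
def prefixWord (ψ : Cantor) (n : ℕ) : List Bool := (List.range n).map ψ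

/-- `l` is a prefix of the infinite sequence `ψ`. -/
def IsPrefixOf (l : List Bool) (ψ : Cantor) : Prop :=
  ∀ i (h : i < l.length), l.get ⟨i, h⟩ = ψ i

/-- The transducer `T` computes the map `f` on infinite binary sequences: on every input
`ψ` the finite outputs along the run are prefixes of `f ψ`, and their lengths tend to
infinity, so that the infinite concatenated output is exactly `f ψ`. -/
def Transducer.Computes {S : Type} (T : Transducer S) (f : Cantor → Cantor) : Prop :=
  ∀ ψ : Cantor, (∀ n, IsPrefixOf (T.oStar T.s0 (prefixWord ψ n)) (f ψ)) ∧
    (∀ k, ∃ n, k ≤ (T.oStar T.s0 (prefixWord ψ n)).length)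

/-- A homeomorphism of the Cantor space is rational if some asynchronous binary
transducer (with finitely many states) computes it. -/
def IsRational (f : Cantor ≃ₜ Cantor) : Prop :=
  ∃ (n : ℕ) (T : Transducer (Fin n)), T.Computes ⇑f

/-- `r` is the restriction `f|_α`: there is a finite word `β` (necessarily the longest
common prefix of `f(I_α)`) with `f(αω) = β · r(ω)` for all `ω`, where maximality of `β`
is expressed by saying that the outputs of `r` do not all share their first digit. -/
def IsRestrictionAt (f : Cantor ≃ₜ Cantor) (α : List Bool) (r : Cantor → Cantor) : Prop :=
  ∃ β : List Bool, (∀ ψ : Cantor, f (prepend α ψ) = prepend β (r ψ)) ∧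
    ∃ ψ ψ' : Cantor, r ψ 0 ≠ r ψ' 0

/-- The set of all restrictions of `f` as `α` ranges over finite binary words. -/
def restrictions (f : Cantor ≃ₜ Cantor) : Set (Cantor → Cantor) :=
  {r | ∃ α : List Bool, IsRestrictionAt f α r}

/-- `f` has finitely many distinct restrictions. -/
def FinitelyManyRestrictions (f : Cantor ≃ₜ Cantor) : Prop :=
  (restrictions f).Finite

/-- The group of self-homeomorphisms of the Cantor space, with `(f * g) x = f (g x)`. -/
instance : Group (Cantor ≃ₜ Cantor) where
  mul f g := g.trans f
  one := Homeomorph.refl _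
  inv := Homeomorph.symm
  mul_assoc _ _ _ := rfl
  one_mul _ := rfl
  mul_one _ := rfl
  inv_mul_cancel f := Homeomorph.ext fun x => f.symm_apply_apply x

/-- `k` is the homeomorphism `(f, g)`, acting as `f` on `I₀` and as `g` on `I₁`. -/
def IsPair (k f g : Cantor ≃ₜ Cantor) : Prop :=
  (∀ ζ : Cantor, k (prepend [false] ζ) = prepend [false] (f ζ)) ∧
  (∀ ζ : Cantor, k (prepend [true] ζ) = prepend [true] (g ζ))

/-- `x₀` is the first generator of Thompson's group `F`. -/
def IsX0 (x₀ : Cantor ≃ₜ Cantor) : Prop :=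
  (∀ ζ : Cantor, x₀ (prepend [false, false] ζ) = prepend [false] ζ) ∧
  (∀ ζ : Cantor, x₀ (prepend [false, true] ζ) = prepend [true, false] ζ) ∧
  (∀ ζ : Cantor, x₀ (prepend [true] ζ) = prepend [true, true] ζ)

/-- `f` has small support: it is the identity outside a proper nonempty clopen set. -/
def HasSmallSupport (f : Cantor ≃ₜ Cantor) : Prop :=
  ∃ E : Set Cantor, IsClopen E ∧ E.Nonempty ∧ E ≠ Set.univ ∧ ∀ ψ ∉ E, f ψ = ψ

/-- A group `G` of homeomorphisms of the Cantor space is full if every homeomorphism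
that locally agrees with `G` belongs to `G`. -/
def Full (G : Subgroup (Cantor ≃ₜ Cantor)) : Prop :=
  ∀ h : Cantor ≃ₜ Cantor,
    (∀ p : Cantor, ∃ U : Set Cantor, IsOpen U ∧ p ∈ U ∧ ∃ g ∈ G, ∀ x ∈ U, h x = g x) →
    h ∈ G

/-- A group `G` of homeomorphisms of the Cantor space is flexible if for all proper
nonempty clopen sets `E₁, E₂` there is `g ∈ G` with `g(E₁) ⊆ E₂`. -/
def Flexible (G : Subgroup (Cantor ≃ₜ Cantor)) : Prop :=
  ∀ E₁ E₂ : Set Cantor, IsClopen E₁ → E₁.Nonempty → E₁ ≠ Set.univ →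
    IsClopen E₂ → E₂.Nonempty → E₂ ≠ Set.univ →
    ∃ g ∈ G, ⇑g '' E₁ ⊆ E₂

/-- The map flipping every `p`-th binary digit (digits are indexed from 1, so the
digit at index `n : ℕ` is the `(n+1)`-st digit). -/
def flipFun (p : ℕ) (ψ : Cantor) : Cantor :=
  fun n => if p ∣ (n + 1) then !(ψ n) else ψ n

/-!
Rationality is a local property: a transducer may read a fixed number of leading digits and
then continue as one of finitely many transducers. Hence `R` is full, and in a full group a
nontrivial `f` factors as `g⁻¹ (g f)`, where `g` swaps a clopen set `E` with its disjoint
image `f(E)`; both `g` and `g f` have small support.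

An element `s` of small support is conjugated inside `R` to one supported in the cone `I₁₀`.
The infinite product `A` of the conjugates `x₀ʲ s x₀⁻ʲ`, acting as `s` on every cone
`1ʲ I₁₀`, is again computed by a transducer, and `⁅A, x₀⁆ = s`. So elements of small support
are commutators, and `[R, R] = R`.
-/

def shift (n : ℕ) (ψ : Cantor) : Cantor := fun i => ψ (i + n)

section Words

variable (α β : List Bool) (ψ χ : Cantor)

theorem prepend_apply_lt {n : ℕ} (h : n < α.length) : prepend α ψ n = α[n] := dif_pos h

@[simp] theorem prefixWord_zero : prefixWord ψ 0 = [] := rfl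

@[simp] theorem shift_zero : shift 0 ψ = ψ := rfl

@[simp] theorem prefixWord_length (n : ℕ) : (prefixWord ψ n).length = n := by
  simp [prefixWord]

@[simp] theorem prefixWord_getElem {n i : ℕ} (h : i < (prefixWord ψ n).length) :
    (prefixWord ψ n)[i] = ψ i := by
  simp [prefixWord]

@[simp] theorem prepend_nil : prepend [] ψ = ψ := by
  funext n
  simp [prepend]

theorem prepend_append : prepend (α ++ β) ψ = prepend α (prepend β ψ) := by
  funext n
  simp only [prepend, List.length_append, List.get_eq_getElem, List.getElem_append]
  split_ifs <;> first | rfl | (congr 1; omega)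

theorem shift_prepend {k : ℕ} (hk : k ≤ α.length) :
    shift k (prepend α ψ) = prepend (α.drop k) ψ := by
  funext n
  simp only [shift, prepend, List.length_drop, List.get_eq_getElem, List.getElem_drop]
  split_ifs <;> (congr 1; omega)

@[simp] theorem shift_prepend_length : shift α.length (prepend α ψ) = ψ := by
  rw [shift_prepend α ψ le_rfl, List.drop_length, prepend_nil]

theorem prefixWord_prepend_of_le {n : ℕ} (h : n ≤ α.length) :
    prefixWord (prepend α ψ) n = α.take n := by
  apply List.ext_getElem (by simp; omega)
  intro i hi _
  simp only [prefixWord_getElem, List.getElem_take]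
  exact prepend_apply_lt _ _ (by simp at hi; omega)

@[simp] theorem prefixWord_prepend_length : prefixWord (prepend α ψ) α.length = α := by
  rw [prefixWord_prepend_of_le _ _ le_rfl, List.take_length]

theorem prefixWord_add (m k : ℕ) :
    prefixWord ψ (m + k) = prefixWord ψ m ++ prefixWord (shift m ψ) k := by
  apply List.ext_getElem (by simp)
  intro i _ _
  simp only [prefixWord_getElem, List.getElem_append, prefixWord_length, shift]
  split_ifs <;> first | rfl | (congr 1; omega)

theorem prefixWord_take {k n : ℕ} (h : k ≤ n) : (prefixWord ψ n).take k = prefixWord ψ k :=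
  List.ext_getElem (by simp; omega) fun _ _ _ => by simp

theorem prefixWord_prepend_of_ge {n : ℕ} (h : α.length ≤ n) :
    prefixWord (prepend α ψ) n = α ++ prefixWord ψ (n - α.length) := by
  obtain ⟨k, rfl⟩ := Nat.exists_eq_add_of_le h
  simp [prefixWord_add]

@[simp] theorem prepend_prefixWord_shift (n : ℕ) :
    prepend (prefixWord ψ n) (shift n ψ) = ψ := by
  funext i
  simp only [prepend, prefixWord_length, List.get_eq_getElem, prefixWord_getElem, shift]
  split_ifs <;> first | rfl | (congr 1; omega)

theorem prepend_prefixWord_apply {n i : ℕ} (h : i < n) :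
    prepend (prefixWord ψ n) χ i = ψ i := by
  simp [prepend_apply_lt _ _ (show i < (prefixWord ψ n).length by simpa)]

theorem mem_cone_iff_prefixWord : ψ ∈ cone α ↔ prefixWord ψ α.length = α := by
  simp only [cone, Set.mem_ofPred_eq, List.get_eq_getElem, List.ext_get_iff, prefixWord_length,
    prefixWord_getElem, true_and]
  exact ⟨fun h i h₁ h₂ => h i h₂, fun h i hi => h i (by simpa using hi) hi⟩

theorem mem_cone_iff_exists : ψ ∈ cone α ↔ ∃ ξ, ψ = prepend α ξ := by
  constructor
  · intro h
    refine ⟨shift α.length ψ, ?_⟩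
    conv_lhs => rw [← prepend_prefixWord_shift ψ α.length, (mem_cone_iff_prefixWord α ψ).1 h]
  · rintro ⟨ξ, rfl⟩
    simp [mem_cone_iff_prefixWord]

theorem prepend_mem_cone : prepend α ψ ∈ cone α := (mem_cone_iff_exists α _).2 ⟨ψ, rfl⟩

theorem isPrefixOf_iff_mem_cone : IsPrefixOf α ψ ↔ ψ ∈ cone α :=
  forall₂_congr fun _ _ => eq_comm

theorem mem_cone_prefixWord {χ ψ : Cantor} {n : ℕ} :
    χ ∈ cone (prefixWord ψ n) ↔ ∀ i < n, χ i = ψ i := by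
  simp only [cone, Set.mem_ofPred_eq, List.get_eq_getElem, prefixWord_getElem, prefixWord_length]

theorem self_mem_cone_prefixWord (n : ℕ) : ψ ∈ cone (prefixWord ψ n) :=
  mem_cone_prefixWord.2 fun _ _ => rfl

theorem cone_prefixWord_anti {m n : ℕ} (h : m ≤ n) :
    cone (prefixWord ψ n) ⊆ cone (prefixWord ψ m) := fun χ hχ =>
  mem_cone_prefixWord.2 fun i hi => mem_cone_prefixWord.1 hχ i (by omega)

theorem isPrefixOf_prefixWord (n : ℕ) : IsPrefixOf (prefixWord ψ n) ψ :=
  (isPrefixOf_iff_mem_cone _ _).2 (self_mem_cone_prefixWord ψ n)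

theorem prepend_head_shift_one : prepend [ψ 0] (shift 1 ψ) = ψ :=
  prepend_prefixWord_shift ψ 1

variable {α β ψ}

theorem mem_cone_true_false : ψ ∈ cone [true, false] ↔ ψ 0 = true ∧ ψ 1 = false :=
  ⟨fun h => ⟨h 0 (by simp), h 1 (by simp)⟩, fun ⟨h₀, h₁⟩ i hi => by
    simp only [List.length_cons, List.length_nil] at hi
    interval_cases i
    exacts [h₀, h₁]⟩

theorem prefixWord_eq_replicate {n : ℕ} (h : ∀ i < n, ψ i = true) :
    prefixWord ψ n = List.replicate n true := by
  refine List.eq_replicate_iff.2 ⟨prefixWord_length _ _, fun b hb => ?_⟩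
  obtain ⟨i, hi, rfl⟩ := List.mem_map.1 hb
  exact h i (List.mem_range.1 hi)

theorem find_eq_of_forall_lt (h : ∃ i, ψ i = false) {k : ℕ} (hk : ψ k = false)
    (hlt : ∀ i < k, ψ i = true) : Nat.find h = k :=
  (Nat.find_eq_iff h).2 ⟨hk, fun i hi => by simp [hlt i hi]⟩

theorem IsPrefixOf.prepend (h : IsPrefixOf β ψ) : IsPrefixOf (α ++ β) (prepend α ψ) := by
  obtain ⟨ξ, rfl⟩ := (mem_cone_iff_exists _ _).1 ((isPrefixOf_iff_mem_cone _ _).1 h)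
  rw [isPrefixOf_iff_mem_cone, ← prepend_append]
  exact prepend_mem_cone _ _

theorem IsPrefixOf.of_prefix (hαβ : α <+: β) (h : IsPrefixOf β ψ) : IsPrefixOf α ψ :=
  fun i hi => (hαβ.getElem hi).trans (h i (by have := hαβ.length_le; omega))

end Words

section CantorTopology

theorem isClopen_cone (α : List Bool) : IsClopen (cone α) := by
  have h : cone α = ⋂ i : Fin α.length, (fun ψ : Cantor => ψ i) ⁻¹' {α.get i} := by
    ext ψ
    simp only [cone, Set.mem_ofPred_eq, Set.mem_iInter, Set.mem_preimage, Set.mem_singleton_iff]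
    exact ⟨fun h i => h i i.isLt, fun h i hi => h ⟨i, hi⟩⟩
  rw [h]
  exact isClopen_iInter_of_finite fun i => (isClopen_discrete _).preimage (continuous_apply _)

theorem exists_cone_subset {U : Set Cantor} (hU : IsOpen U) {ψ : Cantor} (hψ : ψ ∈ U) :
    ∃ n, cone (prefixWord ψ n) ⊆ U := by
  obtain ⟨I, u, hIu, hsub⟩ := isOpen_pi_iff.1 hU ψ hψ
  refine ⟨I.sup id + 1, fun χ hχ => hsub fun i hi => ?_⟩
  rw [mem_cone_prefixWord.1 hχ i (Nat.lt_succ_of_le (Finset.le_sup (f := id) hi))]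
  exact (hIu i hi).2

end CantorTopology

namespace Transducer

variable {S S' : Type} (T : Transducer S)

theorem tStar_append (s : S) (u v : List Bool) :
    T.tStar s (u ++ v) = T.tStar (T.tStar s u) v := by
  induction u generalizing s with
  | nil => rfl
  | cons b u ih => exact ih _

theorem oStar_append (s : S) (u v : List Bool) :
    T.oStar s (u ++ v) = T.oStar s u ++ T.oStar (T.tStar s u) v := by
  induction u generalizing s with
  | nil => rfl
  | cons b u ih => simp [oStar, tStar, ih]

theorem oStar_prefixWord_prefix (s : S) (ψ : Cantor) {m n : ℕ} (h : m ≤ n) :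
    T.oStar s (prefixWord ψ m) <+: T.oStar s (prefixWord ψ n) := by
  obtain ⟨k, rfl⟩ := Nat.exists_eq_add_of_le h
  rw [prefixWord_add, oStar_append]
  exact List.prefix_append _ _

def ComputesFrom (s : S) (u : List Bool) (f : Cantor → Cantor) : Prop :=
  ∀ ξ, (∀ n, IsPrefixOf (u ++ T.oStar s (prefixWord ξ n)) (f ξ)) ∧
    ∀ k, ∃ n, k ≤ (u ++ T.oStar s (prefixWord ξ n)).length

variable {T} {f : Cantor → Cantor}

theorem computes_iff_computesFrom : T.Computes f ↔ T.ComputesFrom T.s0 [] f := by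
  simp only [Computes, ComputesFrom, List.nil_append]

theorem ComputesFrom.computes_at {T' : Transducer S'} {s : S} {u v : List Bool}
    (hT : T.ComputesFrom s u f) {ψ χ : Cantor} {m : ℕ}
    (hrun : ∀ n, T'.oStar T'.s0 (prefixWord ψ (m + n)) =
      v ++ (u ++ T.oStar s (prefixWord χ n))) :
    (∀ n, IsPrefixOf (T'.oStar T'.s0 (prefixWord ψ n)) (prepend v (f χ))) ∧
      ∀ k, ∃ n, k ≤ (T'.oStar T'.s0 (prefixWord ψ n)).length := by
  refine ⟨fun n => ?_, fun k => ?_⟩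
  · refine IsPrefixOf.of_prefix (T'.oStar_prefixWord_prefix _ ψ (Nat.le_add_left n m)) ?_
    rw [hrun]
    exact ((hT χ).1 n).prepend
  · obtain ⟨n, hn⟩ := (hT χ).2 k
    exact ⟨m + n, by simp only [hrun, List.length_append] at hn ⊢; omega⟩

theorem Computes.computesFrom_prepend (h : T.Computes f) (γ : List Bool) :
    T.ComputesFrom (T.tStar T.s0 γ) (T.oStar T.s0 γ) (fun ξ => f (prepend γ ξ)) := by
  have hrun : ∀ ξ n, T.oStar T.s0 γ ++ T.oStar (T.tStar T.s0 γ) (prefixWord ξ n) =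
      T.oStar T.s0 (prefixWord (prepend γ ξ) (γ.length + n)) := fun ξ n => by
    rw [prefixWord_prepend_of_ge _ _ (by omega), Nat.add_sub_cancel_left, oStar_append]
  refine fun ξ => ⟨fun n => hrun ξ n ▸ (h _).1 _, fun k => ?_⟩
  obtain ⟨n, hn⟩ := (h (prepend γ ξ)).2 k
  refine ⟨n, hrun ξ n ▸ hn.trans ?_⟩
  exact (T.oStar_prefixWord_prefix _ _ (by omega)).length_le

/-- When `e` is injective the states outside its range are never reached, so their
transitions are irrelevant. -/
noncomputable def embed (T : Transducer S) (e : S → S') : Transducer S' :=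
  haveI : Nonempty S := ⟨T.s0⟩
  ⟨e T.s0, fun s b => e (T.t (Function.invFun e s) b), fun s b => T.o (Function.invFun e s) b⟩

variable {e : S → S'}

theorem oStar_embed (T : Transducer S) (he : e.Injective) (s : S) (w : List Bool) :
    (T.embed e).oStar (e s) w = T.oStar s w := by
  have : Nonempty S := ⟨T.s0⟩
  induction w generalizing s with
  | nil => rfl
  | cons b w ih =>
    have hinv : Function.invFun e (e s) = s := Function.leftInverse_invFun he s
    simp only [oStar, embed, hinv]
    exact congrArg _ (ih _)

theorem ComputesFrom.embed {s : S} {u : List Bool} (h : T.ComputesFrom s u f)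
    (he : e.Injective) : (T.embed e).ComputesFrom (e s) u f := by
  simpa only [ComputesFrom, oStar_embed T he] using h

theorem Computes.embed (h : T.Computes f) (he : e.Injective) : (T.embed e).Computes f :=
  computes_iff_computesFrom.2 ((computes_iff_computesFrom.1 h).embed he)

theorem Computes.continuous (h : T.Computes f) : Continuous f := by
  refine continuous_pi fun i => continuous_iff_continuousAt.2 fun ψ => ?_
  obtain ⟨n, hn⟩ := (h ψ).2 (i + 1)
  have hconst : ∀ χ ∈ cone (prefixWord ψ n), f χ i = f ψ i := fun χ hχ => by
    have hw : prefixWord χ n = prefixWord ψ n := by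
      simpa using (mem_cone_iff_prefixWord _ χ).1 hχ
    have hχ := (h χ).1 n
    rw [hw] at hχ
    exact (hχ i (by omega)).symm.trans ((h ψ).1 n i (by omega))
  exact continuousAt_const.congr (Filter.eventuallyEq_of_mem
    ((isClopen_cone _).isOpen.mem_nhds (self_mem_cone_prefixWord ψ n)) fun χ hχ =>
      (hconst χ hχ).symm)

def copy : Transducer Unit := ⟨(), fun _ _ => (), fun _ b => [b]⟩

@[simp] theorem oStar_copy (s : Unit) (w : List Bool) : copy.oStar s w = w := by
  induction w with
  | nil => rfl
  | cons b w ih => exact congrArg (b :: ·) ih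

theorem computesFrom_copy (u : List Bool) : copy.ComputesFrom () u (prepend u) :=
  fun ξ => ⟨fun n => by simpa using (isPrefixOf_prefixWord ξ n).prepend,
    fun k => ⟨k, by simp⟩⟩

end Transducer

open Transducer

def IsRationalMap (f : Cantor → Cantor) : Prop :=
  ∃ (n : ℕ) (T : Transducer (Fin n)), T.Computes f

theorem Transducer.Computes.isRationalMap {S : Type} [Finite S] {T : Transducer S}
    {f : Cantor → Cantor} (h : T.Computes f) : IsRationalMap f :=
  ⟨Nat.card S, T.embed (Finite.equivFin S), h.embed (Finite.equivFin S).injective⟩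

theorem IsRationalMap.continuous {f : Cantor → Cantor} (h : IsRationalMap f) : Continuous f :=
  let ⟨_, _, hT⟩ := h; hT.continuous

def rationalHomeomorph {f g : Cantor → Cantor} (hf : IsRationalMap f) (hg : IsRationalMap g)
    (hgf : Function.LeftInverse g f) (hfg : Function.RightInverse g f) : Cantor ≃ₜ Cantor where
  toFun := f
  invFun := g
  left_inv := hgf
  right_inv := hfg
  continuous_toFun := hf.continuous
  continuous_invFun := hg.continuous

instance (N : ℕ) : Finite {w : List Bool // w.length < N} :=
  (List.finite_length_lt Bool N).to_subtype

instance (N : ℕ) : Finite {w : List Bool // w.length = N} :=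
  (List.finite_length_eq Bool N).to_subtype

namespace Transducer

variable {S : Type}

/-- Reads the first `N` digits `γ` silently, then writes `ini γ` and continues as `M γ`
started in state `sI γ`. -/
def glue (N : ℕ) (hN : 0 < N) (M : List Bool → Transducer S) (sI : List Bool → S)
    (ini : List Bool → List Bool) :
    Transducer ({w : List Bool // w.length < N} ⊕ {w : List Bool // w.length = N} × S) where
  s0 := .inl ⟨[], hN⟩
  t
    | .inl w, b =>
      if h : w.1.length + 1 < N then .inl ⟨w.1 ++ [b], by simpa using h⟩
      else .inr (⟨w.1 ++ [b], by have := w.2; simp; omega⟩, sI (w.1 ++ [b]))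
    | .inr (γ, s), b => .inr (γ, (M γ).t s b)
  o
    | .inl w, b => if w.1.length + 1 < N then [] else ini (w.1 ++ [b])
    | .inr (γ, s), b => (M γ).o s b

variable {N : ℕ} {hN : 0 < N} {M : List Bool → Transducer S} {sI : List Bool → S}
  {ini : List Bool → List Bool}

theorem oStar_glue_inr (γ : {w : List Bool // w.length = N}) (s : S) (w : List Bool) :
    (glue N hN M sI ini).oStar (.inr (γ, s)) w = (M γ).oStar s w := by
  induction w generalizing s with
  | nil => rfl
  | cons b w ih => exact congrArg _ (ih _)

theorem run_glue_of_length_lt (u : {w : List Bool // w.length < N}) (w : List Bool)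
    (h : (u.1 ++ w).length < N) :
    (glue N hN M sI ini).tStar (.inl u) w = .inl ⟨u.1 ++ w, h⟩ ∧
      (glue N hN M sI ini).oStar (.inl u) w = [] := by
  induction w generalizing u with
  | nil => simp [tStar, oStar]
  | cons b w ih =>
    have hb : u.1.length + 1 < N := by simp at h; omega
    have := ih ⟨u.1 ++ [b], by simpa using hb⟩ (by simpa using h)
    simpa [tStar, oStar, glue, hb] using this

theorem run_glue_of_length_eq (γ : List Bool) (hγ : γ.length = N) :
    (glue N hN M sI ini).tStar (glue N hN M sI ini).s0 γ = .inr (⟨γ, hγ⟩, sI γ) ∧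
      (glue N hN M sI ini).oStar (glue N hN M sI ini).s0 γ = ini γ := by
  obtain ⟨u, b, rfl⟩ := γ.eq_nil_or_concat'.resolve_left (by rintro rfl; simp at hγ; omega)
  have hu : u.length < N := by simp at hγ; omega
  have hb : ¬ u.length + 1 < N := by simp at hγ; omega
  obtain ⟨ht, ho⟩ := run_glue_of_length_lt (hN := hN) (M := M) (sI := sI) (ini := ini)
    ⟨[], hN⟩ u hu
  simp only [List.nil_append] at ht ho
  rw [tStar_append, oStar_append, show (glue N hN M sI ini).s0 = .inl ⟨[], hN⟩ from rfl, ht, ho]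
  simp [tStar, oStar, glue, hb]

theorem computes_glue {h : Cantor → Cantor}
    (hM : ∀ γ, γ.length = N →
      (M γ).ComputesFrom (sI γ) (ini γ) (fun ξ => h (prepend γ ξ))) :
    (glue N hN M sI ini).Computes h := fun ψ => by
  have hrun : ∀ n, (glue N hN M sI ini).oStar (glue N hN M sI ini).s0
      (prefixWord ψ (N + n)) = [] ++ (ini (prefixWord ψ N) ++
        (M (prefixWord ψ N)).oStar (sI (prefixWord ψ N)) (prefixWord (shift N ψ) n)) := by
    intro n
    obtain ⟨ht, ho⟩ := run_glue_of_length_eq (hN := hN) (M := M) (sI := sI) (ini := ini)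
      (prefixWord ψ N) (prefixWord_length ψ N)
    rw [prefixWord_add, oStar_append, ht, ho, oStar_glue_inr, List.nil_append]
  simpa using (hM _ (prefixWord_length ψ N)).computes_at hrun

end Transducer

theorem IsRationalMap.of_locally {ι : Type} [Finite ι] {r : ι → Cantor → Cantor}
    (hr : ∀ i, IsRationalMap (r i)) {h : Cantor → Cantor} {N : ℕ} (hN : 0 < N)
    (sel : List Bool → ι) (hsel : ∀ ψ, h ψ = r (sel (prefixWord ψ N)) ψ) :
    IsRationalMap h := by
  choose n T hT using hr
  refine (computes_glue (hN := hN)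
    (M := fun γ => (T (sel γ)).embed (Sigma.mk (β := fun i => Fin (n i)) (sel γ)))
    (sI := fun γ => ⟨sel γ, (T (sel γ)).tStar (T (sel γ)).s0 γ⟩)
    (ini := fun γ => (T (sel γ)).oStar (T (sel γ)).s0 γ) fun γ hγ => ?_).isRationalMap
  have hloc : (fun ξ => h (prepend γ ξ)) = fun ξ => r (sel γ) (prepend γ ξ) := by
    funext ξ
    rw [hsel, ← hγ, prefixWord_prepend_length]
  rw [hloc]
  exact ((hT _).computesFrom_prepend γ).embed sigma_mk_injective

def recode (L : ℕ) (F : List Bool → List Bool) (ψ : Cantor) : Cantor :=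
  prepend (F (prefixWord ψ L)) (shift L ψ)

theorem recode_prepend {L : ℕ} (F : List Bool → List Bool) {w : List Bool} (hw : w.length = L)
    (ξ : Cantor) : recode L F (prepend w ξ) = prepend (F w) ξ := by
  subst hw
  simp [recode]

theorem recode_prepend_of_le {L : ℕ} (F : List Bool → List Bool) {w : List Bool}
    (hw : L ≤ w.length) (ξ : Cantor) :
    recode L F (prepend w ξ) = prepend (F (w.take L) ++ w.drop L) ξ := by
  rw [recode, prefixWord_prepend_of_le _ _ hw, shift_prepend _ _ hw, prepend_append]

theorem isRationalMap_recode {L : ℕ} (hL : 0 < L) (F : List Bool → List Bool) :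
    IsRationalMap (recode L F) :=
  (computes_glue (hN := hL) (M := fun _ => copy) (sI := fun _ => ()) (ini := F)
    fun γ hγ => by simpa only [recode_prepend F hγ] using computesFrom_copy (F γ)).isRationalMap

/-- It suffices to test words `w` of length `L` followed by `L'` more digits `v`, since
`recode L' F'` only reads the first `L'` digits of `F w ++ v`. -/
theorem recode_leftInverse {L L' : ℕ} {F F' : List Bool → List Bool}
    (h : ∀ w v : List Bool, w.length = L → v.length = L' →
      F' ((F w ++ v).take L') ++ (F w ++ v).drop L' = w ++ v) :
    Function.LeftInverse (recode L' F') (recode L F) := fun ψ => by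
  obtain ⟨w, v, ξ, hw, hv, rfl⟩ :
      ∃ w v ξ, w.length = L ∧ v.length = L' ∧ ψ = prepend (w ++ v) ξ :=
    ⟨_, _, _, prefixWord_length ψ L, prefixWord_length _ L', by
      rw [prepend_append, prepend_prefixWord_shift, prepend_prefixWord_shift]⟩
  rw [prepend_append, recode_prepend F hw, ← prepend_append,
    recode_prepend_of_le F' (by simp [hv]), h w v hw hv, prepend_append]

def recodeHomeomorph {L L' : ℕ} (hL : 0 < L) (hL' : 0 < L') {F F' : List Bool → List Bool}
    (h : ∀ w v : List Bool, w.length = L → v.length = L' →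
      F' ((F w ++ v).take L') ++ (F w ++ v).drop L' = w ++ v)
    (h' : ∀ w v : List Bool, w.length = L' → v.length = L →
      F ((F' w ++ v).take L) ++ (F' w ++ v).drop L = w ++ v) : Cantor ≃ₜ Cantor :=
  rationalHomeomorph (isRationalMap_recode hL F) (isRationalMap_recode hL' F')
    (recode_leftInverse h) (recode_leftInverse h')

theorem full_of_forall_isRational {R : Subgroup (Cantor ≃ₜ Cantor)}
    (hR : ∀ f, f ∈ R ↔ IsRational f) : Full R := by
  intro h hloc
  choose U hU hpU g hgR hg using hloc
  choose n hn using fun p => exists_cone_subset (hU p) (hpU p)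
  obtain ⟨t, ht⟩ := CompactSpace.elim_nhds_subcover (fun p => cone (prefixWord p (n p)))
    fun p => (isClopen_cone _).isOpen.mem_nhds (self_mem_cone_prefixWord p _)
  have hcover : ∀ ψ, ∃ p : t, ψ ∈ cone (prefixWord p (n p)) := fun ψ => by
    have hψ : ψ ∈ ⋃ p ∈ t, cone (prefixWord p (n p)) := by rw [ht]; trivial
    obtain ⟨p, hp, hψ⟩ := Set.mem_iUnion₂.1 hψ
    exact ⟨⟨p, hp⟩, hψ⟩
  choose sel hsel using fun w : List Bool => hcover (prepend w fun _ => false)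
  refine (hR h).2 (IsRationalMap.of_locally (r := fun p : t => ⇑(g p))
    (fun p => (hR _).1 (hgR p)) (N := t.sup n + 1) (by omega) sel
    fun ψ => hg _ _ (hn _ (mem_cone_prefixWord.2 fun i hi => ?_)))
  have hle : n (sel (prefixWord ψ (t.sup n + 1))) ≤ t.sup n := Finset.le_sup (sel _).2
  rw [← prepend_prefixWord_apply ψ (fun _ => false) (show i < t.sup n + 1 by omega)]
  exact mem_cone_prefixWord.1 (hsel _) i hi

theorem exists_isClopen_disjoint_image {f : Cantor ≃ₜ Cantor} (hf : f ≠ 1) :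
    ∃ E : Set Cantor, IsClopen E ∧ E.Nonempty ∧ Disjoint E (f '' E) ∧
      (E ∪ f '' E)ᶜ.Nonempty := by
  obtain ⟨ψ, hψ⟩ : ∃ ψ, ψ ≠ f ψ := by
    by_contra! h
    exact hf (Homeomorph.ext fun ψ => (h ψ).symm)
  obtain ⟨u, v, hu, hv, hψu, hfψv, huv⟩ := t2_separation hψ
  obtain ⟨n, hn⟩ := exists_cone_subset (hu.inter (hv.preimage f.continuous)) ⟨hψu, hfψv⟩
  have hsub := cone_prefixWord_anti ψ n.le_succ
  have hu' : cone (prefixWord ψ n) ⊆ u := fun χ hχ => (hn hχ).1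
  have hv' : f '' cone (prefixWord ψ (n + 1)) ⊆ v :=
    Set.image_subset_iff.2 fun χ hχ => (hn (hsub hχ)).2
  refine ⟨cone (prefixWord ψ (n + 1)), isClopen_cone _, ⟨ψ, self_mem_cone_prefixWord ψ _⟩,
    huv.mono (hsub.trans hu') hv', Function.update ψ n (!ψ n), ?_⟩
  have hζ : Function.update ψ n (!ψ n) ∈ cone (prefixWord ψ n) :=
    mem_cone_prefixWord.2 fun i hi => Function.update_of_ne (by omega) _ _
  rintro (hE | hfE)
  · simpa using mem_cone_prefixWord.1 hE n n.lt_succ_self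
  · exact Set.disjoint_left.1 huv (hu' hζ) (hv' hfE)

theorem Homeomorph.isClopen_image {X Y : Type*} [TopologicalSpace X] [TopologicalSpace Y]
    (h : X ≃ₜ Y) {s : Set X} : IsClopen (h '' s) ↔ IsClopen s :=
  and_congr h.isClosed_image h.isOpen_image

section Swap

variable {f : Cantor ≃ₜ Cantor} {E : Set Cantor}

open Classical in
noncomputable def swapFun (f : Cantor ≃ₜ Cantor) (E : Set Cantor) : Cantor → Cantor :=
  E.piecewise f ((f '' E).piecewise f.symm id)

theorem swapFun_of_mem {ψ : Cantor} (hψ : ψ ∈ E) : swapFun f E ψ = f ψ := by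
  simp [swapFun, hψ]

theorem swapFun_of_mem_image (hE : Disjoint E (f '' E)) {ψ : Cantor} (hψ : ψ ∈ f '' E) :
    swapFun f E ψ = f.symm ψ := by
  simp [swapFun, Set.disjoint_right.1 hE hψ, hψ]

theorem swapFun_of_notMem {ψ : Cantor} (hψ : ψ ∉ E ∪ f '' E) : swapFun f E ψ = ψ := by
  simp only [Set.mem_union, not_or] at hψ
  simp [swapFun, hψ.1, hψ.2]

theorem swapFun_involutive (hE : Disjoint E (f '' E)) : Function.Involutive (swapFun f E) := by
  intro ψ
  by_cases h₁ : ψ ∈ E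
  · rw [swapFun_of_mem h₁, swapFun_of_mem_image hE ⟨ψ, h₁, rfl⟩, f.symm_apply_apply]
  by_cases h₂ : ψ ∈ f '' E
  · obtain ⟨χ, hχ, rfl⟩ := h₂
    rw [swapFun_of_mem_image hE ⟨χ, hχ, rfl⟩, f.symm_apply_apply, swapFun_of_mem hχ]
  · have h : ψ ∉ E ∪ f '' E := by simp [h₁, h₂]
    rw [swapFun_of_notMem h, swapFun_of_notMem h]

theorem continuous_swapFun (hE : IsClopen E) : Continuous (swapFun f E) := by
  classical
  refine f.continuous.piecewise (by simp [hE.frontier_eq]) ?_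
  exact f.symm.continuous.piecewise (by simp [(f.isClopen_image.2 hE).frontier_eq])
    continuous_id

noncomputable def swapHomeomorph (f : Cantor ≃ₜ Cantor) (hE : IsClopen E)
    (hdisj : Disjoint E (f '' E)) : Cantor ≃ₜ Cantor where
  toFun := swapFun f E
  invFun := swapFun f E
  left_inv := (swapFun_involutive hdisj).leftInverse
  right_inv := (swapFun_involutive hdisj).rightInverse
  continuous_toFun := continuous_swapFun hE
  continuous_invFun := continuous_swapFun hE

theorem Full.swapHomeomorph_mem {G : Subgroup (Cantor ≃ₜ Cantor)} (hG : Full G) (hf : f ∈ G)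
    (hE : IsClopen E) (hdisj : Disjoint E (f '' E)) : swapHomeomorph f hE hdisj ∈ G := by
  have hfE := f.isClopen_image.2 hE
  refine hG _ fun p => ?_
  by_cases h₁ : p ∈ E
  · exact ⟨E, hE.isOpen, h₁, f, hf, fun _ => swapFun_of_mem⟩
  by_cases h₂ : p ∈ f '' E
  · exact ⟨f '' E, hfE.isOpen, h₂, f⁻¹, inv_mem hf, fun _ => swapFun_of_mem_image hdisj⟩
  · exact ⟨(E ∪ f '' E)ᶜ, (hE.union hfE).compl.isOpen, by simp [h₁, h₂], 1, one_mem _,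
      fun _ => swapFun_of_notMem⟩

end Swap

theorem Full.exists_hasSmallSupport_mul {G : Subgroup (Cantor ≃ₜ Cantor)} (hG : Full G)
    {f : Cantor ≃ₜ Cantor} (hf : f ∈ G) (hf1 : f ≠ 1) :
    ∃ g ∈ G, HasSmallSupport g ∧ HasSmallSupport (g * f) := by
  obtain ⟨E, hE, ⟨ψ, hψ⟩, hdisj, ⟨ζ, hζ⟩⟩ := exists_isClopen_disjoint_image hf1
  refine ⟨swapHomeomorph f hE hdisj, hG.swapHomeomorph_mem hf hE hdisj,
    ⟨E ∪ f '' E, hE.union (f.isClopen_image.2 hE), ⟨ψ, .inl hψ⟩,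
      fun h => hζ (h ▸ Set.mem_univ ζ), fun _ => swapFun_of_notMem⟩,
    ⟨Eᶜ, hE.compl, ⟨ζ, fun h => hζ (.inl h)⟩,
      fun h => (h ▸ Set.mem_univ ψ : ψ ∈ Eᶜ) hψ,
      fun χ hχ => ?_⟩⟩
  rw [Set.notMem_compl_iff] at hχ
  exact (swapFun_of_mem_image hdisj ⟨χ, hχ, rfl⟩).trans (f.symm_apply_apply χ)

theorem Full.closure_hasSmallSupport_eq_top {G : Subgroup (Cantor ≃ₜ Cantor)} (hG : Full G) :
    Subgroup.closure {g : G | HasSmallSupport (g : Cantor ≃ₜ Cantor)} = ⊤ := by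
  refine eq_top_iff.2 fun f _ => ?_
  by_cases hf1 : f = 1
  · exact hf1 ▸ one_mem _
  obtain ⟨g, hgG, hg, hgf⟩ := hG.exists_hasSmallSupport_mul f.2 fun h => hf1 (Subtype.ext h)
  have hf : f = (⟨g, hgG⟩ : G)⁻¹ * (⟨g, hgG⟩ * f) := by group
  rw [hf]
  exact mul_mem (inv_mem (Subgroup.subset_closure hg)) (Subgroup.subset_closure hgf)

section ThompsonX0

def x0Word : List Bool → List Bool
  | false :: false :: t => false :: t
  | false :: true :: t => true :: false :: t
  | true :: t => true :: true :: t
  | w => w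

def x0InvWord : List Bool → List Bool
  | false :: t => false :: false :: t
  | true :: false :: t => false :: true :: t
  | true :: true :: t => true :: t
  | w => w

theorem x0InvWord_x0Word (w v : List Bool) (hw : w.length = 2) (hv : v.length = 2) :
    x0InvWord ((x0Word w ++ v).take 2) ++ (x0Word w ++ v).drop 2 = w ++ v := by
  obtain ⟨a, b, rfl⟩ := List.length_eq_two.1 hw
  obtain ⟨c, d, rfl⟩ := List.length_eq_two.1 hv
  cases a <;> cases b <;> cases c <;> cases d <;> rfl

theorem x0Word_x0InvWord (w v : List Bool) (hw : w.length = 2) (hv : v.length = 2) :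
    x0Word ((x0InvWord w ++ v).take 2) ++ (x0InvWord w ++ v).drop 2 = w ++ v := by
  obtain ⟨a, b, rfl⟩ := List.length_eq_two.1 hw
  obtain ⟨c, d, rfl⟩ := List.length_eq_two.1 hv
  cases a <;> cases b <;> cases c <;> cases d <;> rfl

def x0 : Cantor ≃ₜ Cantor :=
  recodeHomeomorph two_pos two_pos x0InvWord_x0Word x0Word_x0InvWord

theorem isRational_x0 : IsRational x0 := isRationalMap_recode two_pos _

theorem isX0_x0 : IsX0 x0 := by
  refine ⟨fun ζ => recode_prepend x0Word rfl ζ, fun ζ => recode_prepend x0Word rfl ζ,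
    fun ζ => ?_⟩
  conv_lhs => rw [← prepend_head_shift_one ζ, ← prepend_append]
  exact (recode_prepend x0Word rfl _).trans
    ((prepend_append [true, true] [ζ 0] _).trans (congrArg _ (prepend_head_shift_one ζ)))

end ThompsonX0

section ConeConjugator

variable (γ : List Bool)

/-- Moves the complement of `I_γ` into `I₁₀`, reading `γ.length + 2` digits:
`γ0 ↦ 0`, `γ11 ↦ 11`, `γ10 ↦ 10γ`, and `w ↦ 10w` when `γ` is not a prefix of `w`. -/
def coneWord (w : List Bool) : List Bool :=
  if w = γ ++ [true, false] then true :: false :: γ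
  else if γ <+: w then w.drop γ.length else true :: false :: w

def coneInvWord (w : List Bool) : List Bool :=
  if w.take 2 = [true, false] then
    if w.drop 2 = γ then γ ++ [true, false] else w.drop 2
  else γ ++ w

theorem coneInvWord_coneWord (w v : List Bool) (hw : w.length = γ.length + 2) :
    coneInvWord γ ((coneWord γ w ++ v).take (γ.length + 2)) ++
      (coneWord γ w ++ v).drop (γ.length + 2) = w ++ v := by
  by_cases h₁ : w = γ ++ [true, false]
  · subst h₁
    simp [coneWord, coneInvWord]
  by_cases h₂ : γ <+: w
  · obtain ⟨r, rfl⟩ := h₂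
    obtain ⟨a, b, rfl⟩ := List.length_eq_two.1 (by simpa using hw : r.length = 2)
    have hab : ¬ (a = true ∧ b = false) := by rintro ⟨rfl, rfl⟩; exact h₁ rfl
    simp [coneWord, h₁, coneInvWord, hab]
  · have hγ : w.take γ.length ≠ γ := fun h => h₂ (h ▸ List.take_prefix _ _)
    simp [coneWord, h₁, h₂, coneInvWord, hγ, List.take_append, List.drop_append, hw,
      ← List.append_assoc]

theorem coneWord_coneInvWord (w v : List Bool) (hw : w.length = γ.length + 2)
    (hv : v.length = γ.length + 2) :
    coneWord γ ((coneInvWord γ w ++ v).take (γ.length + 2)) ++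
      (coneInvWord γ w ++ v).drop (γ.length + 2) = w ++ v := by
  obtain ⟨a, b, t, rfl⟩ : ∃ a b t, w = a :: b :: t := by
    match w, hw with
    | a :: b :: t, _ => exact ⟨a, b, t, rfl⟩
  have ht : t.length = γ.length := by simpa using hw
  by_cases hab : a = true ∧ b = false
  · obtain ⟨rfl, rfl⟩ := hab
    by_cases h₂ : t = γ
    · subst h₂
      simp [coneWord, coneInvWord, List.take_append]
    · have hpre : ¬ γ <+: t ++ v.take 2 := fun h =>
        h₂ (List.prefix_iff_eq_take.1 h ▸ by simp [ht])
      have hne : t ++ v.take 2 ≠ γ ++ [true, false] := fun h => h₂ (List.append_inj h ht).1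
      simp [coneWord, coneInvWord, h₂, hpre, hne, List.take_append, List.drop_append, ht,
        List.take_of_length_le, List.drop_of_length_le]
  · simp [coneWord, coneInvWord, hab, List.take_append, List.drop_append,
      List.take_of_length_le, List.drop_of_length_le]

def coneConj : Cantor ≃ₜ Cantor :=
  recodeHomeomorph (by omega) (by omega) (fun w v hw _ => coneInvWord_coneWord γ w v hw)
    (coneWord_coneInvWord γ)

theorem isRational_coneConj : IsRational (coneConj γ) := isRationalMap_recode (by omega) _

theorem coneConj_mem_cone {ψ : Cantor} (hψ : ψ ∉ cone γ) :
    coneConj γ ψ ∈ cone [true, false] := by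
  have hpre : ¬ γ <+: prefixWord ψ (γ.length + 2) := fun h => hψ <| by
    rw [mem_cone_iff_prefixWord, List.prefix_iff_eq_take.1 h, prefixWord_take _ (by omega),
      prefixWord_length]
  have hne : prefixWord ψ (γ.length + 2) ≠ γ ++ [true, false] := fun h =>
    hpre (h ▸ List.prefix_append _ _)
  change prepend (coneWord γ _) _ ∈ _
  rw [coneWord, if_neg hne, if_neg hpre]
  exact (mem_cone_iff_exists _ _).2 ⟨_, prepend_append [true, false] _ _⟩

end ConeConjugator

section Swindle

theorem forall_eq_true_or_apply_zero_eq_false_or_exists (ψ : Cantor) :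
    (∀ i, ψ i = true) ∨ ψ 0 = false ∨
      ∃ j χ, χ ∈ cone [true, false] ∧ ψ = prepend (List.replicate j true) χ := by
  by_cases h : ∃ k, ψ k = false
  · have hmin : ∀ i < Nat.find h, ψ i = true := fun i hi => by simpa using Nat.find_min h hi
    rcases hk : Nat.find h with _ | j
    · exact .inr (.inl (hk ▸ Nat.find_spec h))
    · refine .inr (.inr ⟨j, shift j ψ, mem_cone_true_false.2 ⟨?_, ?_⟩, ?_⟩)
      · simpa [shift] using hmin j (by omega)
      · simpa [shift, add_comm, hk] using Nat.find_spec h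
      · rw [← prefixWord_eq_replicate fun i hi => hmin i (by omega), prepend_prefixWord_shift]
  · exact .inl (by simpa using h)

variable (s : Cantor → Cantor)

open Classical in
/-- For `s` supported in `I₁₀`, the infinite product of the conjugates `x₀ʲ s x₀⁻ʲ`,
acting as `1ʲχ ↦ 1ʲ s(χ)` for `χ ∈ I₁₀`; here `j + 1` is the position of the first `0`
(on `I₀` the truncated `0 - 1 = 0` gives `s`, which is the identity there). -/
noncomputable def swindle (ψ : Cantor) : Cantor :=
  if h : ∃ k, ψ k = false then
    prepend (prefixWord ψ (Nat.find h - 1)) (s (shift (Nat.find h - 1) ψ))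
  else ψ

theorem swindle_of_forall_eq_true {ψ : Cantor} (h : ∀ i, ψ i = true) : swindle s ψ = ψ := by
  simp [swindle, h]

theorem swindle_of_apply_zero_eq_false {ψ : Cantor} (h₀ : ψ 0 = false) :
    swindle s ψ = s ψ := by
  have h : ∃ k, ψ k = false := ⟨0, h₀⟩
  rw [swindle, dif_pos h, find_eq_of_forall_lt h h₀ (by simp)]
  simp

theorem swindle_prepend_replicate (j : ℕ) {χ : Cantor} (hχ : χ ∈ cone [true, false]) :
    swindle s (prepend (List.replicate j true) χ) = prepend (List.replicate j true) (s χ) := by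
  rw [mem_cone_true_false] at hχ
  have hdig : ∀ i, prepend (List.replicate j true) χ i = if i < j then true else χ (i - j) :=
    fun i => by simp [prepend]
  have hj : prepend (List.replicate j true) χ (j + 1) = false := by
    simp [hdig, show j + 1 - j = 1 by omega, hχ.2]
  have h : ∃ k, prepend (List.replicate j true) χ k = false := ⟨_, hj⟩
  have hlt : ∀ i < j + 1, prepend (List.replicate j true) χ i = true := fun i hi => by
    rw [hdig]
    split_ifs with hij
    · rfl
    · simpa [show i - j = 0 by omega] using hχ.1
  rw [swindle, dif_pos h, find_eq_of_forall_lt h hj hlt, Nat.add_sub_cancel]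
  simpa using congrArg₂ (fun w ξ => prepend w (s ξ))
    (prefixWord_prepend_length (List.replicate j true) χ)
    (shift_prepend_length (List.replicate j true) χ)

theorem swindle_of_mem_cone {χ : Cantor} (hχ : χ ∈ cone [true, false]) :
    swindle s χ = s χ := by
  simpa using swindle_prepend_replicate s 0 hχ

theorem swindle_prepend_true {ζ : Cantor} (hζ : ζ 0 = true) :
    swindle s (prepend [true] ζ) = prepend [true] (swindle s ζ) := by
  rcases forall_eq_true_or_apply_zero_eq_false_or_exists ζ with h | h | ⟨j, χ, hχ, rfl⟩
  · have h' : ∀ i, prepend [true] ζ i = true := fun i => by cases i <;> simp [prepend, h]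
    rw [swindle_of_forall_eq_true s h, swindle_of_forall_eq_true s h']
  · simp [h] at hζ
  · rw [← prepend_append, List.singleton_append, ← List.replicate_succ,
      swindle_prepend_replicate s _ hχ, swindle_prepend_replicate s _ hχ, List.replicate_succ,
      ← List.singleton_append, prepend_append]

end Swindle

theorem Homeomorph.apply_mem_of_forall_notMem_eq {X : Type*} [TopologicalSpace X]
    {s : X ≃ₜ X} {D : Set X} (hs : ∀ x ∉ D, s x = x) {x : X} (hx : x ∈ D) :
    s x ∈ D := by
  by_contra h
  exact h ((s.injective (hs _ h)).symm ▸ hx)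

theorem Homeomorph.symm_apply_of_forall_notMem_eq {X : Type*} [TopologicalSpace X]
    {s : X ≃ₜ X} {D : Set X} (hs : ∀ x ∉ D, s x = x) : ∀ x ∉ D, s.symm x = x :=
  fun x hx => s.symm_apply_eq.2 (hs x hx).symm

section SwindleHomeomorph

variable {s : Cantor ≃ₜ Cantor}

theorem swindle_of_apply_zero_eq_false_of_support (hs : ∀ ψ ∉ cone [true, false], s ψ = ψ)
    {ψ : Cantor} (h₀ : ψ 0 = false) : swindle s ψ = ψ :=
  (swindle_of_apply_zero_eq_false s h₀).trans
    (hs ψ fun h => by simp [(mem_cone_true_false.1 h).1] at h₀)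

theorem swindle_apply_zero (hs : ∀ ψ ∉ cone [true, false], s ψ = ψ) {ζ : Cantor}
    (hζ : ζ 0 = true) : swindle s ζ 0 = true := by
  rcases forall_eq_true_or_apply_zero_eq_false_or_exists ζ with h | h | ⟨_ | j, χ, hχ, rfl⟩
  · rw [swindle_of_forall_eq_true s h, hζ]
  · simp [h] at hζ
  · rw [swindle_prepend_replicate s 0 hχ]
    simpa using (mem_cone_true_false.1 (s.apply_mem_of_forall_notMem_eq hs hχ)).1
  · rw [swindle_prepend_replicate s _ hχ]
    simp [prepend]

theorem swindle_leftInverse (hs : ∀ ψ ∉ cone [true, false], s ψ = ψ) :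
    Function.LeftInverse (swindle s.symm) (swindle s) := fun ψ => by
  have hs' := Homeomorph.symm_apply_of_forall_notMem_eq hs
  rcases forall_eq_true_or_apply_zero_eq_false_or_exists ψ with h | h | ⟨j, χ, hχ, rfl⟩
  · rw [swindle_of_forall_eq_true s h, swindle_of_forall_eq_true _ h]
  · rw [swindle_of_apply_zero_eq_false_of_support hs h,
      swindle_of_apply_zero_eq_false_of_support hs' h]
  · rw [swindle_prepend_replicate s j hχ, swindle_prepend_replicate _ j
      (s.apply_mem_of_forall_notMem_eq hs hχ), s.symm_apply_apply]

end SwindleHomeomorph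

namespace Transducer

variable {S : Type} (T : Transducer S)

/-- Computes `swindle s` when `T` computes `s`: the state `inl p` records whether a leading
`1` is being withheld; at the first `0` the run continues as `T` on that `1` and the `0`. -/
def swindleT : Transducer (Bool ⊕ S) where
  s0 := .inl false
  t
    | .inl _, true => .inl true
    | .inl p, false => .inr (T.tStar T.s0 ((if p then [true] else []) ++ [false]))
    | .inr q, b => .inr (T.t q b)
  o
    | .inl p, true => if p then [true] else []
    | .inl p, false => T.oStar T.s0 ((if p then [true] else []) ++ [false])
    | .inr q, b => T.o q b

theorem oStar_swindleT_inr (q : S) (w : List Bool) :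
    T.swindleT.oStar (.inr q) w = T.oStar q w := by
  induction w generalizing q with
  | nil => rfl
  | cons b w ih => exact congrArg _ (ih _)

theorem run_swindleT_replicate (n : ℕ) :
    T.swindleT.tStar (.inl true) (List.replicate n true) = .inl true ∧
      T.swindleT.oStar (.inl true) (List.replicate n true) = List.replicate n true := by
  induction n with
  | zero => exact ⟨rfl, rfl⟩
  | succ n ih => simpa [List.replicate_succ, tStar, oStar, swindleT] using ih

theorem oStar_swindleT_true_replicate (n : ℕ) (w : List Bool) :
    T.swindleT.oStar T.swindleT.s0 (true :: (List.replicate n true ++ w)) =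
      List.replicate n true ++ T.swindleT.oStar (.inl true) w := by
  obtain ⟨ht, ho⟩ := T.run_swindleT_replicate n
  change [] ++ T.swindleT.oStar (.inl true) (List.replicate n true ++ w) = _
  rw [oStar_append, ht, ho, List.nil_append]

theorem oStar_swindleT_false (p : Bool) (w : List Bool) :
    T.swindleT.oStar (.inl p) (false :: w) =
      T.oStar T.s0 ((if p then [true] else []) ++ false :: w) := by
  change T.oStar T.s0 ((if p then [true] else []) ++ [false]) ++ T.swindleT.oStar (.inr _) w = _
  rw [oStar_swindleT_inr, ← oStar_append, List.append_assoc, List.singleton_append]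

theorem oStar_swindleT_prepend_replicate (j : ℕ) (ζ : Cantor) (n : ℕ) :
    T.swindleT.oStar T.swindleT.s0
      (prefixWord (prepend (List.replicate j true) (prepend [true, false] ζ)) (j + 2 + n)) =
    List.replicate j true ++ (T.oStar T.s0 [true, false] ++
      T.oStar (T.tStar T.s0 [true, false]) (prefixWord ζ n)) := by
  have hw : List.replicate j true ++ [true, false] ++ prefixWord ζ n =
      true :: (List.replicate j true ++ false :: prefixWord ζ n) := by
    rw [show [true, false] = [true] ++ [false] from rfl, ← List.append_assoc,
      ← List.replicate_succ', List.replicate_succ]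
    simp
  rw [← prepend_append, prefixWord_prepend_of_ge _ _ (by simp), ← oStar_append]
  simp only [List.length_append, List.length_replicate, List.length_cons, List.length_nil]
  rw [Nat.add_sub_cancel_left, hw, oStar_swindleT_true_replicate, oStar_swindleT_false]
  rfl

theorem computes_swindleT {s : Cantor → Cantor} (hT : T.Computes s) :
    T.swindleT.Computes (swindle s) := fun ψ => by
  rcases forall_eq_true_or_apply_zero_eq_false_or_exists ψ with h | h | ⟨j, χ, hχ, rfl⟩
  · have hrun : ∀ n, T.swindleT.oStar T.swindleT.s0 (prefixWord ψ (1 + n)) =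
        [] ++ ([] ++ copy.oStar () (prefixWord ψ n)) := fun n => by
      rw [prefixWord_eq_replicate fun i _ => h i, prefixWord_eq_replicate fun i _ => h i,
        add_comm, List.replicate_succ]
      simpa [oStar] using T.oStar_swindleT_true_replicate n []
    simpa [swindle_of_forall_eq_true s h] using (computesFrom_copy []).computes_at hrun
  · have hrun : ∀ n, T.swindleT.oStar T.swindleT.s0 (prefixWord ψ (1 + n)) =
        [] ++ (T.oStar T.s0 [false] ++
          T.oStar (T.tStar T.s0 [false]) (prefixWord (shift 1 ψ) n)) := fun n => by
      rw [prefixWord_add, show prefixWord ψ 1 = [false] by simp [prefixWord, h], ← oStar_append]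
      exact T.oStar_swindleT_false false _
    have := (hT.computesFrom_prepend [false]).computes_at hrun
    rwa [prepend_nil, ← h, prepend_head_shift_one, ← swindle_of_apply_zero_eq_false s h] at this
  · obtain ⟨ζ, rfl⟩ := (mem_cone_iff_exists _ _).1 hχ
    rw [swindle_prepend_replicate s j hχ]
    exact (hT.computesFrom_prepend [true, false]).computes_at
      (T.oStar_swindleT_prepend_replicate j ζ)

end Transducer

open scoped commutatorElement

theorem IsX0.apply_of_apply_zero_eq_true {x₀ : Cantor ≃ₜ Cantor} (hx : IsX0 x₀)
    {ζ : Cantor} (hζ : ζ 0 = true) : x₀ ζ = prepend [true] ζ := by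
  rw [← prepend_head_shift_one ζ, hζ, hx.2.2]
  exact prepend_append [true] [true] _

/-- Conjugating `swindle s` by `x₀` moves each cone `1ʲ I₁₀` to `1ʲ⁺¹ I₁₀`, so the
commutator keeps only the action of `s` on `I₁₀`. -/
theorem commutatorElement_swindle {x₀ A s : Cantor ≃ₜ Cantor} (hx : IsX0 x₀)
    (hs : ∀ ψ ∉ cone [true, false], s ψ = ψ) (hA : ⇑A = swindle s)
    (hA' : ⇑A.symm = swindle s.symm) : ⁅A, x₀⁆ = s := by
  have hs' := Homeomorph.symm_apply_of_forall_notMem_eq hs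
  have hx' : ∀ {ψ χ}, x₀ χ = ψ → x₀.symm ψ = χ := fun h => x₀.symm_apply_eq.2 h.symm
  refine Homeomorph.ext fun ψ => ?_
  change A (x₀ (A.symm (x₀.symm ψ))) = s ψ
  have hψ : ψ = prepend [ψ 0, ψ 1] (shift 2 ψ) := (prepend_prefixWord_shift ψ 2).symm
  cases h₀ : ψ 0 with
  | false =>
    have h₁ : x₀.symm ψ = prepend [false, false] (shift 1 ψ) :=
      hx' (by rw [hx.1, ← h₀, prepend_head_shift_one])
    rw [h₁, hA', swindle_of_apply_zero_eq_false_of_support hs' rfl, hx.1, ← h₀,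
      prepend_head_shift_one, hA, swindle_of_apply_zero_eq_false s h₀]
  | true =>
    cases h₁ : ψ 1 with
    | false =>
      rw [h₀, h₁] at hψ
      rw [hψ, hx' (hx.2.1 _), hA', swindle_of_apply_zero_eq_false_of_support hs' rfl, hx.2.1,
        hA, swindle_of_mem_cone s (prepend_mem_cone _ _)]
    | true =>
      have hη : shift 1 ψ 0 = true := h₁
      have hψη : x₀ (shift 1 ψ) = ψ := by
        rw [hx.apply_of_apply_zero_eq_true hη, ← h₀, prepend_head_shift_one]
      have hA'η : A.symm (shift 1 ψ) 0 = true := by rw [hA']; exact swindle_apply_zero hs' hη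
      rw [hx' hψη, hx.apply_of_apply_zero_eq_true hA'η, hA, swindle_prepend_true s hA'η, ← hA,
        A.apply_symm_apply, ← h₀, prepend_head_shift_one]
      exact (hs ψ fun h => by simp [(mem_cone_true_false.1 h).2] at h₁).symm

section RationalGroup

variable {R : Subgroup (Cantor ≃ₜ Cantor)}

theorem exists_conj_forall_notMem_cone_eq (hR : ∀ f, f ∈ R ↔ IsRational f)
    {s : Cantor ≃ₜ Cantor} (hs : HasSmallSupport s) :
    ∃ c ∈ R, ∀ ψ ∉ cone [true, false], (c * s * c⁻¹) ψ = ψ := by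
  obtain ⟨E, hE, -, hEuniv, hsE⟩ := hs
  obtain ⟨p, hp⟩ := Set.nonempty_compl.2 hEuniv
  obtain ⟨n, hn⟩ := exists_cone_subset hE.compl.isOpen hp
  refine ⟨coneConj (prefixWord p n), (hR _).2 (isRational_coneConj _), fun ψ hψ => ?_⟩
  set c := coneConj (prefixWord p n)
  have hψ' : c.symm ψ ∉ E := fun h =>
    hψ (c.apply_symm_apply ψ ▸ coneConj_mem_cone _ fun h' => hn h' h)
  change c (s (c.symm ψ)) = ψ
  rw [hsE _ hψ', c.apply_symm_apply]

theorem exists_commutatorElement_x0_eq (hR : ∀ f, f ∈ R ↔ IsRational f)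
    {s : Cantor ≃ₜ Cantor} (hsR : s ∈ R) (hs : ∀ ψ ∉ cone [true, false], s ψ = ψ) :
    ∃ A ∈ R, ⁅A, x0⁆ = s := by
  obtain ⟨_, T, hT⟩ := (hR s).1 hsR
  obtain ⟨_, T', hT'⟩ := (hR s⁻¹).1 (inv_mem hsR)
  have hs' := Homeomorph.symm_apply_of_forall_notMem_eq hs
  let A := rationalHomeomorph (computes_swindleT T hT).isRationalMap
    (computes_swindleT T' hT').isRationalMap (swindle_leftInverse hs) (swindle_leftInverse hs')
  exact ⟨A, (hR A).2 (computes_swindleT T hT).isRationalMap,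
    commutatorElement_swindle isX0_x0 hs rfl rfl⟩

theorem exists_commutatorElement_eq_of_hasSmallSupport (hR : ∀ f, f ∈ R ↔ IsRational f)
    {s : Cantor ≃ₜ Cantor} (hsR : s ∈ R) (hs : HasSmallSupport s) :
    ∃ a ∈ R, ∃ b ∈ R, ⁅a, b⁆ = s := by
  obtain ⟨c, hcR, hcs⟩ := exists_conj_forall_notMem_cone_eq hR hs
  obtain ⟨A, hAR, hA⟩ := exists_commutatorElement_x0_eq hR
    (mul_mem (mul_mem hcR hsR) (inv_mem hcR)) hcs
  refine ⟨c⁻¹ * A * c, mul_mem (mul_mem (inv_mem hcR) hAR) hcR,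
    c⁻¹ * x0 * c, mul_mem (mul_mem (inv_mem hcR) ((hR x0).2 isRational_x0)) hcR, ?_⟩
  calc ⁅c⁻¹ * A * c, c⁻¹ * x0 * c⁆ = c⁻¹ * ⁅A, x0⁆ * c := by
        simp only [commutatorElement_def]; group
    _ = s := by rw [hA]; group

end RationalGroup

/-- the rational group `R` is generated by its elements of small support,
and consequently equals its commutator subgroup. -/
theorem smallSupport_generates (R : Subgroup (Cantor ≃ₜ Cantor))
    (hR : ∀ f : Cantor ≃ₜ Cantor, f ∈ R ↔ IsRational f) :
    Subgroup.closure {g : ↥R | HasSmallSupport (g : Cantor ≃ₜ Cantor)} = ⊤ ∧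
      commutator ↥R = ⊤ := by
  have hclosure := (full_of_forall_isRational hR).closure_hasSmallSupport_eq_top
  refine ⟨hclosure, ?_⟩
  rw [eq_top_iff, ← hclosure, Subgroup.closure_le, commutator_def]
  rintro ⟨s, hsR⟩ hs
  obtain ⟨a, ha, b, hb, hab⟩ := exists_commutatorElement_eq_of_hasSmallSupport hR hsR hs
  have hs : (⟨s, hsR⟩ : R) = ⁅(⟨a, ha⟩ : R), ⟨b, hb⟩⁆ := Subtype.ext hab.symm
  rw [SetLike.mem_coe, hs]
  exact Subgroup.commutator_mem_commutator (Subgroup.mem_top _) (Subgroup.mem_top _)
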